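/- arXiv:2001.02484 — 3 statements merged into one kernel-verified Lean document; each statement's English description precedes it below -/
import Mathlib

section
/- For every integer t ≥ 1, every bridgeless (2t+1)-regular class 2 multigraph G satisfies φ_c(G) > 2 + 2/(2t−1). -/
/-!
Basic theory of finite multigraphs (parallel edges allowed, no loops),
nowhere-zero `r`-flows, the circular flow number, proper edge colorings,
the chromatic index, class 1 / class 2, perfect matchings, edge cuts,
`r`-bipartitions, and the operation of adding parallel copies of a matching.
-/

/-- A finite multigraph: a finite type of vertices, a finite type of edges,
each edge having an (ordered, for reference purposes) pair of distinct endpoints.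
Parallel edges are allowed; loops are excluded. -/
structure Multigraph : Type 1 where
  V : Type
  E : Type
  vFinite : Finite V
  eFinite : Finite E
  ends : E → V × V
  no_loop : ∀ e, (ends e).1 ≠ (ends e).2

namespace Multigraph

variable (G : Multigraph)

instance : Finite G.V := G.vFinite
instance : Finite G.E := G.eFinite

/-- The first endpoint of an edge (w.r.t. the reference orientation). -/
def tail (e : G.E) : G.V := (G.ends e).1

/-- The second endpoint of an edge (w.r.t. the reference orientation). -/
def head (e : G.E) : G.V := (G.ends e).2

/-- `v` is an endpoint of the edge `e`. -/
def Inc (v : G.V) (e : G.E) : Prop := G.tail e = v ∨ G.head e = v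

open Classical in
/-- The endpoint of `e` other than `v`. -/
noncomputable def otherEnd (e : G.E) (v : G.V) : G.V :=
  if G.tail e = v then G.head e else G.tail e

/-- The degree of a vertex: the number of edges incident with it
(no loops, so no edge is counted twice). -/
noncomputable def degree (v : G.V) : ℕ := Nat.card {e : G.E // G.Inc v e}

/-- `G` is `k`-regular. -/
def IsRegular (k : ℕ) : Prop := ∀ v, G.degree v = k

/-- The maximum degree `Δ(G)`. -/
noncomputable def maxDegree : ℕ := sSup (Set.range G.degree)

/-- Two distinct edges are adjacent if they share an endpoint. -/
def EAdj (e e' : G.E) : Prop := e ≠ e' ∧ ∃ v, G.Inc v e ∧ G.Inc v e'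

/-- A proper edge coloring with `k` colors: adjacent edges get distinct colors. -/
def IsProperEdgeColoring {k : ℕ} (c : G.E → Fin k) : Prop :=
  ∀ e e', G.EAdj e e' → c e ≠ c e'

/-- The chromatic index `χ'(G)`. -/
noncomputable def chromaticIndex : ℕ :=
  sInf {k | ∃ c : G.E → Fin k, G.IsProperEdgeColoring c}

/-- `G` is class 1 if `χ'(G) = Δ(G)`. -/
def IsClass1 : Prop := G.chromaticIndex = G.maxDegree

/-- `G` is class 2 if it is not class 1. -/
def IsClass2 : Prop := ¬ G.IsClass1

/-- A nowhere-zero `r`-flow: the orientation `D` is encoded by the signs of `f`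
(a negative value means the edge is used against its reference direction), every
edge has absolute flow value in `[1, r-1]`, and Kirchhoff's law holds at every
vertex. -/
def IsNZFlow (r : ℝ) (f : G.E → ℝ) : Prop :=
  (∀ e, 1 ≤ |f e| ∧ |f e| ≤ r - 1) ∧
  ∀ v : G.V, ∑ᶠ e ∈ {e | G.tail e = v}, f e = ∑ᶠ e ∈ {e | G.head e = v}, f e

/-- `G` admits a nowhere-zero `r`-flow. -/
def HasNZFlow (r : ℝ) : Prop := ∃ f, G.IsNZFlow r f

/-- The circular flow number `φ_c(G)`, as an extended real number:
the infimum of all real `r ≥ 2` such that `G` has a nowhere-zero `r`-flow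
(`+∞` if there is no such `r`, e.g. if `G` has a bridge). -/
noncomputable def flowNumber : EReal :=
  sInf {x : EReal | ∃ r : ℝ, x = (r : EReal) ∧ 2 ≤ r ∧ G.HasNZFlow r}

/-- A perfect matching: every vertex is incident with exactly one edge of `M`. -/
def IsPerfectMatching (M : Set G.E) : Prop :=
  ∀ v, ∃! e, e ∈ M ∧ G.Inc v e

/-- `G` is bipartite: the vertices can be 2-colored with every edge bichromatic. -/
def IsBipartite : Prop :=
  ∃ s : Set G.V, ∀ e, ¬ (G.tail e ∈ s ↔ G.head e ∈ s)

/-- The edge cut `∂_G(X)`: edges with exactly one end in `X`. -/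
def cut (X : Set G.V) : Set G.E := {e | ¬ (G.tail e ∈ X ↔ G.head e ∈ X)}

/-- Add, for each `i : Fin k`, one new parallel copy of each edge of `M i`. -/
noncomputable def addEdgeFamily {k : ℕ} (M : Fin k → Set G.E) : Multigraph where
  V := G.V
  E := G.E ⊕ ((i : Fin k) × ↥(M i))
  vFinite := by infer_instance
  eFinite := by infer_instance
  ends := Sum.elim G.ends (fun p => G.ends p.2.1)
  no_loop := by
    rintro (e | ⟨i, e⟩)
    · exact G.no_loop e
    · exact G.no_loop e.1

/-- `G + kM`: add `k` new parallel copies of each edge of `M`. -/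
noncomputable def addCopies (M : Set G.E) (k : ℕ) : Multigraph :=
  G.addEdgeFamily (fun _ : Fin k => M)

/-- Delete a set of edges. -/
noncomputable def deleteEdges (M : Set G.E) : Multigraph where
  V := G.V
  E := {e : G.E // e ∉ M}
  vFinite := G.vFinite
  eFinite := by infer_instance
  ends := fun e => G.ends e.1
  no_loop := fun e => G.no_loop e.1

/-- Vertex adjacency (there is an edge between `u` and `v`). -/
def VAdj (u v : G.V) : Prop := ∃ e, G.ends e = (u, v) ∨ G.ends e = (v, u)

/-- Reachability by walks. -/
def Reach : G.V → G.V → Prop := Relation.ReflTransGen G.VAdj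

/-- `G` is connected. -/
def Connected : Prop := ∀ u v, G.Reach u v

/-- An edge is a bridge if its ends are not joined by a walk avoiding it. -/
def IsBridge (e : G.E) : Prop :=
  ¬ (G.deleteEdges {e}).Reach (G.tail e) (G.head e)

/-- `G` is bridgeless. -/
def Bridgeless : Prop := ∀ e, ¬ G.IsBridge e

/-- An `r`-bipartition of (the vertex set of) a cubic graph. -/
def IsRBipartition (r : ℝ) (B W : Set G.V) : Prop :=
  B ∪ W = Set.univ ∧ B ∩ W = ∅ ∧
  ∀ X : Set G.V,
    (r / (r - 2)) * |((X ∩ B).ncard : ℝ) - ((X ∩ W).ncard : ℝ)| ≤ ((G.cut X).ncard : ℝ)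

/-- A cubic graph `G` with a perfect matching `M` has the `M`-class-2 property
if `G + (2t-2)M` is class 2 for every integer `t ≥ 1`. -/
def MClass2Property (M : Set G.E) : Prop :=
  ∀ t : ℕ, 1 ≤ t → (G.addCopies M (2 * t - 2)).IsClass2

/-- A cubic graph `G` with a perfect matching `M` has the `M`-class-1 property
if `G + (2t-2)M` is class 1 for every integer `t ≥ 2`. -/
def MClass1Property (M : Set G.E) : Prop :=
  ∀ t : ℕ, 2 ≤ t → (G.addCopies M (2 * t - 2)).IsClass1

/-- An `r`-graph: an `r`-regular multigraph in which every odd set of vertices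
is left by at least `r` edges. -/
def IsRGraph (r : ℕ) : Prop :=
  G.IsRegular r ∧ ∀ X : Set G.V, Odd X.ncard → r ≤ (G.cut X).ncard

end Multigraph

/-!
If `φ_c(G) ≤ 2 + 2/(2t-1)`, then by compactness `G` has a nowhere-zero `(2 + 2/(2t-1))`-flow, and
multiplying it by `2t-1` gives a circulation with `|f e| ∈ [2t-1, 2t+1]` on every edge. Such a
circulation can be rounded to an integral one within the same bounds: no vertex meets exactly one
edge of non-integral value, so these edges are at least as many as the vertices they touch and
carry a nonzero circulation, and pushing `f` along it makes one more value integral.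

At a vertex of degree `2t+1` an integral circulation with these bounds has exactly one edge of
value `±2t`, and either all outgoing values are at most `2t` and all incoming ones at least `2t`,
or the reverse. Hence the edges of value `±2t` form a perfect matching `M`, and the vertices of
the first kind are one side of a bipartition of `G - M`. König's theorem colours the `2t`-regular
bipartite graph `G - M` with `2t` colours and `M` takes one more, so `G` would be class 1.
-/

open Finset
open scoped Classical

theorem IsClosed.exists_norm_le_of_forall_lt {X : Type*} [NormedAddCommGroup X] [ProperSpace X]
    {P : Set X} (hP : IsClosed P) {b : ℝ} (h : ∀ c > b, ∃ x ∈ P, ‖x‖ ≤ c) :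
    ∃ x ∈ P, ‖x‖ ≤ b := by
  obtain ⟨x₀, hx₀, -⟩ := h (b + 1) (by linarith)
  obtain ⟨x, hx, hdist⟩ := hP.exists_infDist_eq_dist ⟨x₀, hx₀⟩ 0
  refine ⟨x, hx, ?_⟩
  rw [← dist_zero_left, ← hdist]
  refine le_of_forall_gt_imp_ge_of_dense fun c hc => ?_
  obtain ⟨y, hy, hyc⟩ := h c hc
  exact (Metric.infDist_le_dist_of_mem hy).trans (by rwa [dist_zero_left])

lemma exists_add_mul_mem_Icc_floor_ceil {ι : Type*} [Fintype ι] (f d : ι → ℝ)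
    (hd : d ≠ 0) :
    ∃ μ : ℝ, (∀ i, f i + μ * d i ∈ Set.Icc (⌊f i⌋ : ℝ) ⌈f i⌉) ∧
      ∃ i, d i ≠ 0 ∧ ∃ n : ℤ, f i + μ * d i = n := by
  -- moving along `d`, the coordinate `i` reaches the integer `target i` after time `step i`
  let target : ι → ℤ := fun i => if 0 < d i then ⌈f i⌉ else ⌊f i⌋
  let step : ι → ℝ := fun i => (target i - f i) / d i
  have hstep : ∀ i, d i ≠ 0 → f i + step i * d i = target i := fun i hi => by
    rw [div_mul_cancel₀ _ hi, add_sub_cancel]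
  have hstep_nonneg : ∀ i, d i ≠ 0 → 0 ≤ step i := fun i hi => by
    rcases hi.lt_or_gt with hneg | hpos
    · exact div_nonneg_of_nonpos (by simp [target, hneg.not_gt, Int.floor_le]) hneg.le
    · exact div_nonneg (by simp [target, hpos, Int.le_ceil]) hpos.le
  have hs : ({i | d i ≠ 0} : Finset ι).Nonempty := by
    obtain ⟨i, hi⟩ := Function.ne_iff.1 hd
    exact ⟨i, by simpa using hi⟩
  obtain ⟨i₀, hi₀, hmin⟩ := Finset.exists_min_image _ step hs
  have hi₀ : d i₀ ≠ 0 := by simpa using hi₀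
  refine ⟨step i₀, fun i => ?_, i₀, hi₀, target i₀, hstep i₀ hi₀⟩
  rcases eq_or_ne (d i) 0 with h0 | h0
  · simp [h0, Int.floor_le, Int.le_ceil]
  have hle : step i₀ ≤ step i := hmin i (by simpa using h0)
  have hμ := hstep_nonneg i₀ hi₀
  have hi := hstep i h0
  rcases h0.lt_or_gt with hneg | hpos
  · simp only [target, hneg.not_gt, if_false] at hi
    have := mul_le_mul_of_nonpos_right hle hneg.le
    constructor <;> nlinarith [Int.le_ceil (f i)]
  · simp only [target, hpos, if_true] at hi
    have := mul_le_mul_of_nonneg_right hle hpos.le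
    constructor <;> nlinarith [Int.floor_le (f i)]

lemma abs_mem_Icc_of_mem_Icc_floor_ceil {L U n : ℤ} {x : ℝ} (hx : |x| ∈ Set.Icc (L : ℝ) U)
    (hn : n ∈ Set.Icc ⌊x⌋ ⌈x⌉) : |n| ∈ Set.Icc L U := by
  obtain ⟨hL, hU⟩ := hx
  obtain ⟨hfl, hce⟩ := hn
  rcases le_or_gt 0 x with h0 | h0
  · rw [abs_of_nonneg h0] at hL hU
    have h1 : L ≤ ⌊x⌋ := Int.le_floor.2 hL
    have h2 : ⌈x⌉ ≤ U := Int.ceil_le.2 hU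
    have h3 : 0 ≤ ⌊x⌋ := Int.floor_nonneg.2 h0
    rw [abs_of_nonneg (h3.trans hfl)]
    exact ⟨h1.trans hfl, hce.trans h2⟩
  · rw [abs_of_neg h0] at hL hU
    have h1 : -U ≤ ⌊x⌋ := Int.le_floor.2 (by push_cast; linarith)
    have h2 : ⌈x⌉ ≤ -L := Int.ceil_le.2 (by push_cast; linarith)
    have h3 : ⌈x⌉ ≤ 0 := Int.ceil_le.2 (by push_cast; linarith)
    rw [abs_of_nonpos (hce.trans h3)]
    constructor <;> linarith

lemma card_abs_eq_eq_one_and_forall_of_le_card_pos {α : Type*} {t : ℕ} (ht : 1 ≤ t)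
    {S : Finset α} {x : α → ℤ} (hS : #S = 2 * t + 1) (hsum : ∑ e ∈ S, x e = 0)
    (hx : ∀ e ∈ S, |x e| ∈ Set.Icc (2 * (t : ℤ) - 1) (2 * t + 1))
    (hpos : t + 1 ≤ #{e ∈ S | 0 < x e}) :
    #{e ∈ S | |x e| = 2 * t} = 1 ∧
      ∀ e ∈ S, x e ≤ 2 * t ∧ (0 < x e ∨ x e ≤ -(2 * t)) := by
  have hsign : ∀ e ∈ S, (0 < x e ∧ 2 * (t : ℤ) - 1 ≤ x e ∧ x e ≤ 2 * t + 1) ∨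
      (x e < 0 ∧ -(2 * (t : ℤ) + 1) ≤ x e ∧ x e ≤ -(2 * t - 1)) := fun e he => by
    obtain ⟨h1, h2⟩ := hx e he
    rcases le_or_gt 0 (x e) with h | h
    · rw [abs_of_nonneg h] at h1 h2; omega
    · rw [abs_of_neg h] at h1 h2; omega
  -- the slacks of `2t - 1 ≤ x e` on the positive side and of `-(2t + 1) ≤ x e` on the negative
  -- side are nonnegative integers adding up to `(2t + 1)² - 4t · #{x > 0} ≤ 1`
  let slack : α → ℤ := fun e => x e + if 0 < x e then -(2 * (t : ℤ) - 1) else 2 * t + 1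
  have hslack0 : ∀ e ∈ S, 0 ≤ slack e := fun e he => by
    rcases hsign e he with h | h <;> simp only [slack] <;> split_ifs <;> omega
  have hslack_sum : ∑ e ∈ S, slack e =
      (2 * t + 1) ^ 2 - 4 * t * #{e ∈ S | 0 < x e} := by
    have hcard := card_filter_add_card_filter_not (s := S) (fun e => 0 < x e)
    have hneg : (#{e ∈ S | ¬0 < x e} : ℤ) = 2 * t + 1 - #{e ∈ S | 0 < x e} := by omega
    simp only [slack, sum_add_distrib, hsum, sum_ite, sum_const, nsmul_eq_mul, zero_add, hneg]
    ring
  have hslack1 : ∑ e ∈ S, slack e = 1 := by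
    have hnonneg := sum_nonneg hslack0
    have hp : (#{e ∈ S | 0 < x e} : ℤ) = t + 1 := by
      have : (t : ℤ) + 1 ≤ #{e ∈ S | 0 < x e} := by exact_mod_cast hpos
      have ht' : (1 : ℤ) ≤ t := by exact_mod_cast ht
      nlinarith
    rw [hslack_sum, hp]
    ring
  have hslack_le : ∀ e ∈ S, slack e ≤ 1 := fun e he =>
    hslack1 ▸ single_le_sum hslack0 he
  have hiff : ∀ e ∈ S, slack e = 1 ↔ |x e| = 2 * t := fun e he => by
    rw [abs_eq (by positivity)]
    rcases hsign e he with h | h <;> simp only [slack] <;> split_ifs <;> omega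
  refine ⟨?_, fun e he => ?_⟩
  · have : (#{e ∈ S | slack e = 1} : ℤ) = 1 := by
      rw [← hslack1, ← sum_boole]
      refine sum_congr rfl fun e he => ?_
      have := hslack0 e he
      have := hslack_le e he
      split_ifs <;> omega
    rw [← filter_congr hiff]
    exact_mod_cast this
  · have := hslack_le e he
    rcases hsign e he with h | h <;> simp only [slack] at this <;> split_ifs at this <;> omega

lemma card_abs_eq_eq_one_and_forall_of_sum_eq_zero {α : Type*} {t : ℕ} (ht : 1 ≤ t)
    {S : Finset α} {x : α → ℤ} (hS : #S = 2 * t + 1) (hsum : ∑ e ∈ S, x e = 0)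
    (hx : ∀ e ∈ S, |x e| ∈ Set.Icc (2 * (t : ℤ) - 1) (2 * t + 1)) :
    #{e ∈ S | |x e| = 2 * t} = 1 ∧
      ((∀ e ∈ S, x e ≤ 2 * t ∧ (0 < x e ∨ x e ≤ -(2 * t))) ∨
        ∀ e ∈ S, -(2 * t) ≤ x e ∧ (x e < 0 ∨ 2 * t ≤ x e)) := by
  by_cases hpos : t + 1 ≤ #{e ∈ S | 0 < x e}
  · exact (card_abs_eq_eq_one_and_forall_of_le_card_pos ht hS hsum hx hpos).imp_right Or.inl
  have hneg : t + 1 ≤ #{e ∈ S | 0 < -x e} := by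
    have hcard := card_filter_add_card_filter_not (s := S) (fun e => 0 < x e)
    have hx0 : ∀ e ∈ S, x e ≠ 0 := fun e he h0 => by
      have := (hx e he).1
      rw [h0, abs_zero] at this
      omega
    rw [filter_congr fun e he => (by have := hx0 e he; omega : ¬0 < x e ↔ 0 < -x e)] at hcard
    omega
  obtain ⟨hone, hside⟩ := card_abs_eq_eq_one_and_forall_of_le_card_pos (x := fun e => -x e) ht
    hS (by rw [sum_neg_distrib, hsum, neg_zero]) (by simpa only [abs_neg] using hx) hneg
  refine ⟨by simpa only [abs_neg] using hone, Or.inr fun e he => ?_⟩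
  have := hside e he
  omega

namespace Multigraph

noncomputable instance (G : Multigraph) : Fintype G.V := Fintype.ofFinite _
noncomputable instance (G : Multigraph) : Fintype G.E := Fintype.ofFinite _

variable {G : Multigraph} {M N : Type*}

lemma degree_eq_card (v : G.V) : G.degree v = #{e | G.Inc v e} := by
  rw [degree, Nat.card_eq_fintype_card, Fintype.card_subtype]

lemma card_filter_inc_eq_two (e : G.E) : #{v | G.Inc v e} = 2 := by
  have : ({v | G.Inc v e} : Finset G.V) = {G.tail e, G.head e} := by
    ext v; simp [Inc, eq_comm]
  exact this ▸ card_pair (G.no_loop e)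

lemma sum_card_filter_inc (F : Finset G.E) : ∑ v, #{e ∈ F | G.Inc v e} = 2 * #F := by
  simp_rw [card_eq_sum_ones, sum_filter]
  rw [sum_comm, mul_sum, mul_one]
  refine sum_congr rfl fun e _ => ?_
  rw [← sum_filter, ← card_eq_sum_ones, card_filter_inc_eq_two]

lemma card_filter_exists_inc_le_card (F : Finset G.E)
    (hdeg : ∀ v, ∀ e ∈ F, G.Inc v e → ∃ e' ∈ F, e' ≠ e ∧ G.Inc v e') :
    #{v | ∃ e ∈ F, G.Inc v e} ≤ #F := by
  have h2 : ∀ v ∈ ({v | ∃ e ∈ F, G.Inc v e} : Finset G.V), 2 ≤ #{e ∈ F | G.Inc v e} :=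
    fun v hv => by
      obtain ⟨e, he, hve⟩ := (mem_filter.1 hv).2
      obtain ⟨e', he', hne, hve'⟩ := hdeg v e he hve
      exact one_lt_card.2 ⟨e, by simp [he, hve], e', by simp [he', hve'], hne.symm⟩
  have := calc 2 * #{v | ∃ e ∈ F, G.Inc v e}
        = ∑ v with ∃ e ∈ F, G.Inc v e, 2 := by rw [sum_const, smul_eq_mul, mul_comm]
    _ ≤ ∑ v with ∃ e ∈ F, G.Inc v e, #{e ∈ F | G.Inc v e} := sum_le_sum h2
    _ ≤ ∑ v, #{e ∈ F | G.Inc v e} := sum_le_univ_sum_of_nonneg fun _ => Nat.zero_le _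
    _ = 2 * #F := sum_card_filter_inc F
  omega

lemma degree_le_of_isProperEdgeColoring {k : ℕ} {c : G.E → Fin k}
    (hc : G.IsProperEdgeColoring c) (v : G.V) : G.degree v ≤ k := by
  have hinj : Function.Injective fun e : {e // G.Inc v e} => c e :=
    fun e e' hee' => by_contra fun hne =>
      hc e e' ⟨fun h => hne (Subtype.ext h), v, e.2, e'.2⟩ hee'
  simpa [degree] using Nat.card_le_card_of_injective _ hinj

lemma maxDegree_le_chromaticIndex : G.maxDegree ≤ G.chromaticIndex := by
  have hne : {k | ∃ c : G.E → Fin k, G.IsProperEdgeColoring c}.Nonempty :=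
    ⟨_, Fintype.equivFin G.E, fun e e' hee' => (Fintype.equivFin G.E).injective.ne hee'.1⟩
  obtain ⟨c, hc⟩ := Nat.sInf_mem hne
  exact csSup_le' (Set.forall_mem_range.2 (degree_le_of_isProperEdgeColoring hc))

lemma isClass1_of_isProperEdgeColoring {k : ℕ} (hreg : G.IsRegular k) {c : G.E → Fin k}
    (hc : G.IsProperEdgeColoring c) : G.IsClass1 := by
  refine le_antisymm ?_ maxDegree_le_chromaticIndex
  rcases isEmpty_or_nonempty G.V with hV | ⟨⟨v⟩⟩
  · exact Nat.sInf_le ⟨fun e => isEmptyElim (G.tail e), fun e => isEmptyElim (G.tail e)⟩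
  · calc G.chromaticIndex ≤ k := Nat.sInf_le ⟨c, hc⟩
      _ = G.degree v := (hreg v).symm
      _ ≤ G.maxDegree := le_csSup (Set.finite_range _).bddAbove ⟨v, rfl⟩

def IsCirculation [AddCommMonoid M] (f : G.E → M) : Prop :=
  ∀ v, ∑ e with G.tail e = v, f e = ∑ e with G.head e = v, f e

lemma isNZFlow_iff {r : ℝ} {f : G.E → ℝ} :
    G.IsNZFlow r f ↔ (∀ e, 1 ≤ |f e| ∧ |f e| ≤ r - 1) ∧ G.IsCirculation f := by
  simp only [IsNZFlow, IsCirculation, finsum_mem_eq_toFinset_sum, Set.toFinset_ofPred]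

lemma isClosed_setOf_isCirculation : IsClosed {f : G.E → ℝ | G.IsCirculation f} := by
  simp only [IsCirculation, Set.ofPred_forall]
  exact isClosed_iInter fun v => isClosed_eq (by fun_prop) (by fun_prop)

namespace IsCirculation

lemma add [AddCommMonoid M] {f g : G.E → M} (hf : G.IsCirculation f) (hg : G.IsCirculation g) :
    G.IsCirculation (f + g) := fun v => by
  simp only [Pi.add_apply, sum_add_distrib, hf v, hg v]

lemma smul {R : Type*} [Monoid R] [AddCommMonoid M] [DistribMulAction R M] {f : G.E → M}
    (hf : G.IsCirculation f) (r : R) : G.IsCirculation (r • f) := fun v => by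
  simp only [Pi.smul_apply, ← smul_sum, hf v]

lemma map [AddCommMonoid M] [AddCommMonoid N] {f : G.E → M} (hf : G.IsCirculation f)
    (φ : M →+ N) : G.IsCirculation (φ ∘ f) := fun v => by
  simp only [Function.comp_apply, ← map_sum, hf v]

lemma eq_zero_of_forall_inc_ne [AddCommMonoid M] {f : G.E → M} (hf : G.IsCirculation f)
    {v : G.V} {e : G.E} (he : G.Inc v e) (h : ∀ e', G.Inc v e' → e' ≠ e → f e' = 0) :
    f e = 0 := by
  have hsum : ∀ p : G.E → Prop, (∀ e', p e' → G.Inc v e') →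
      ∑ e' with p e', f e' = if p e then f e else 0 := fun p hp => by
    rw [sum_filter, sum_eq_single e (fun e' _ hne => ?_) (by simp)]
    split_ifs with h'
    exacts [h e' (hp e' h') hne, rfl]
  have hloop : G.tail e ≠ G.head e := G.no_loop e
  have := hf v
  rw [hsum _ fun _ => Or.inl, hsum _ fun _ => Or.inr] at this
  split_ifs at this with h1 h2 h2
  · exact absurd (h1.trans h2.symm) hloop
  · exact this
  · exact this.symm
  · exact (he.elim h1 h2).elim

lemma sum_inc_eq_zero [AddCommGroup M] {f : G.E → M} (hf : G.IsCirculation f) (v : G.V) :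
    ∑ e with G.Inc v e, (if G.tail e = v then f e else -f e) = 0 :=
  calc ∑ e with G.Inc v e, (if G.tail e = v then f e else -f e)
      = ∑ e, ((if G.tail e = v then f e else 0) + if G.head e = v then -f e else 0) := by
        rw [sum_filter]
        refine sum_congr rfl fun e _ => ?_
        have hloop : G.tail e ≠ G.head e := G.no_loop e
        by_cases h1 : G.tail e = v <;> by_cases h2 : G.head e = v <;> simp_all [Inc]
    _ = 0 := by
      rw [sum_add_distrib, ← sum_filter, ← sum_filter, sum_neg_distrib, hf v, add_neg_cancel]

lemma exists_inc_ne_notMem [AddCommGroup M] {f : G.E → M} (hf : G.IsCirculation f)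
    (S : AddSubgroup M) {v : G.V} {e : G.E} (he : G.Inc v e) (hfe : f e ∉ S) :
    ∃ e', G.Inc v e' ∧ e' ≠ e ∧ f e' ∉ S := by
  by_contra! h
  refine hfe ((QuotientAddGroup.eq_zero_iff _).1 ?_)
  exact (hf.map (QuotientAddGroup.mk' S)).eq_zero_of_forall_inc_ne he fun e' he' hne =>
    (QuotientAddGroup.eq_zero_iff _).2 (h e' he' hne)

end IsCirculation

section Boundary

variable {R K : Type*} [CommRing R] [Field K]

variable (R) in
noncomputable def boundary : (G.E → R) →ₗ[R] (G.V → R) where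
  toFun f v := ∑ e with G.tail e = v, f e - ∑ e with G.head e = v, f e
  map_add' f g := by
    ext v
    simp only [Pi.add_apply, sum_add_distrib]
    ring
  map_smul' c f := by
    ext v
    simp only [Pi.smul_apply, smul_eq_mul, ← mul_sum, RingHom.id_apply, mul_sub]

lemma boundary_apply (f : G.E → R) (v : G.V) :
    boundary R f v = ∑ e with G.tail e = v, f e - ∑ e with G.head e = v, f e := rfl

lemma isCirculation_iff_boundary_eq_zero {f : G.E → R} :
    G.IsCirculation f ↔ boundary R f = 0 := by
  simp only [IsCirculation, funext_iff, boundary_apply, Pi.zero_apply, sub_eq_zero]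

lemma sum_boundary_apply (f : G.E → R) : ∑ v, boundary R f v = 0 := by
  simp only [boundary_apply, sum_sub_distrib]
  rw [sum_fiberwise univ G.tail f, sum_fiberwise univ G.head f, sub_self]

lemma boundary_apply_eq_zero {f : G.E → R} {v : G.V} (hf : ∀ e, G.Inc v e → f e = 0) :
    boundary R f v = 0 := by
  rw [boundary_apply, sum_eq_zero fun e he => hf e (Or.inl (mem_filter.1 he).2),
    sum_eq_zero fun e he => hf e (Or.inr (mem_filter.1 he).2), sub_zero]

lemma exists_isCirculation_ne_zero (F : Finset G.E) (hF : F.Nonempty)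
    (hdeg : ∀ v, ∀ e ∈ F, G.Inc v e → ∃ e' ∈ F, e' ≠ e ∧ G.Inc v e') :
    ∃ d : G.E → K, G.IsCirculation d ∧ d ≠ 0 ∧ ∀ e ∉ F, d e = 0 := by
  let VF : Finset G.V := {v | ∃ e ∈ F, G.Inc v e}
  have hVF : #VF ≤ #F := card_filter_exists_inc_le_card F hdeg
  have hoff : ∀ f : G.E → K, (∀ e ∉ F, f e = 0) → ∀ v ∉ VF, boundary K f v = 0 :=
    fun f hf v hv => boundary_apply_eq_zero fun e hve =>
      hf e fun he => hv (mem_filter.2 ⟨mem_univ v, e, he, hve⟩)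
  -- a circulation vanishing off `F` is a kernel vector of `Ψ`, which is not surjective because
  -- the net outflows over `VF` sum to zero; the count `#VF ≤ #F` then forces a nonzero kernel
  let Ψ : (G.E → K) →ₗ[K] (VF → K) × ((Fᶜ : Finset G.E) → K) :=
    (LinearMap.funLeft K K ((↑) : VF → G.V) ∘ₗ boundary K).prod
      (LinearMap.funLeft K K ((↑) : (Fᶜ : Finset G.E) → G.E))
  have hΨ : ∀ f, Ψ f = 0 ↔ (∀ v ∈ VF, boundary K f v = 0) ∧ ∀ e ∉ F, f e = 0 := by
    intro f
    simp [Ψ, Prod.ext_iff, funext_iff, LinearMap.funLeft]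
  have hrange : LinearMap.range Ψ ≠ ⊤ := by
    intro htop
    obtain ⟨e₀, he₀⟩ := hF
    have hv₀ : G.tail e₀ ∈ VF := mem_filter.2 ⟨mem_univ _, e₀, he₀, Or.inl rfl⟩
    obtain ⟨f, hf⟩ := LinearMap.range_eq_top.1 htop (Pi.single ⟨_, hv₀⟩ 1, 0)
    have hVF (v : VF) : boundary K f v = (Pi.single (⟨_, hv₀⟩ : VF) (1 : K) : VF → K) v :=
      congr_fun (congr_arg Prod.fst hf) v
    have hFc : ∀ e ∉ F, f e = 0 := fun e he =>
      congr_fun (congr_arg Prod.snd hf) ⟨e, by simpa⟩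
    have hsum : ∑ v ∈ VF, boundary K f v = 0 := by
      rw [sum_subset (subset_univ VF) fun v _ hv => hoff f hFc v hv]
      exact sum_boundary_apply f
    rw [← sum_coe_sort, sum_congr rfl fun v _ => hVF v, sum_pi_single'] at hsum
    simp at hsum
  have hker : LinearMap.ker Ψ ≠ ⊥ := fun hbot => hrange <| Submodule.eq_top_of_finrank_eq <| by
    have hle := Submodule.finrank_le (LinearMap.range Ψ)
    have hcod :
        Module.finrank K ((VF → K) × ((Fᶜ : Finset G.E) → K)) ≤ Fintype.card G.E := by
      simp only [Module.finrank_prod, Module.finrank_fintype_fun_eq_card, Fintype.card_coe,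
        card_compl]
      have := card_le_univ F
      omega
    rw [LinearMap.finrank_range_of_inj (LinearMap.ker_eq_bot.1 hbot),
      Module.finrank_fintype_fun_eq_card] at hle ⊢
    omega
  obtain ⟨d, hd, hd0⟩ := (Submodule.ne_bot_iff _).1 hker
  obtain ⟨hbd, hdoff⟩ := (hΨ d).1 hd
  refine ⟨d, isCirculation_iff_boundary_eq_zero.2 (funext fun v => ?_), hd0, hdoff⟩
  by_cases hv : v ∈ VF
  exacts [hbd v hv, hoff d hdoff v hv]

end Boundary

lemma hasNZFlow_of_flowNumber_le {b : ℝ} (h : G.flowNumber ≤ b) : G.HasNZFlow b := by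
  let P := {f : G.E → ℝ | G.IsCirculation f ∧ ∀ e, 1 ≤ |f e|}
  have hbound : IsClosed {f : G.E → ℝ | ∀ e, 1 ≤ |f e|} := by
    simp only [Set.ofPred_forall]
    exact isClosed_iInter fun e => isClosed_le continuous_const (by fun_prop)
  have hP : IsClosed P := isClosed_setOf_isCirculation.inter hbound
  have hnear : ∀ c > b - 1, ∃ f ∈ P, ‖f‖ ≤ c := by
    intro c hc
    obtain ⟨_, ⟨r, rfl, hr, f, hf⟩, hrc⟩ :=
      sInf_lt_iff.1 (h.trans_lt (EReal.coe_lt_coe_iff.2 (by linarith : b < c + 1)))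
    rw [EReal.coe_lt_coe_iff] at hrc
    obtain ⟨hfb, hfc⟩ := isNZFlow_iff.1 hf
    refine ⟨f, ⟨hfc, fun e => (hfb e).1⟩, ?_⟩
    refine ((pi_norm_le_iff_of_nonneg (by linarith)).2 fun e => ?_).trans
      (by linarith : r - 1 ≤ c)
    exact (Real.norm_eq_abs _).trans_le (hfb e).2
  obtain ⟨f, ⟨hfc, hf1⟩, hfb⟩ := hP.exists_norm_le_of_forall_lt hnear
  refine ⟨f, isNZFlow_iff.2 ⟨fun e => ⟨hf1 e, ?_⟩, hfc⟩⟩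
  exact (Real.norm_eq_abs (f e) ▸ norm_le_pi_norm f e).trans hfb

theorem IsCirculation.exists_int_mem_Icc_floor_ceil {f : G.E → ℝ} (hf : G.IsCirculation f) :
    ∃ h : G.E → ℤ, G.IsCirculation h ∧ ∀ e, h e ∈ Set.Icc ⌊f e⌋ ⌈f e⌉ := by
  let S := (Int.castAddHom ℝ).range
  induction hn : #{e | f e ∉ S} using Nat.strong_induction_on generalizing f with
  | _ n ih =>
  by_cases hint : ∀ e, f e ∈ S
  · choose h hh using hint
    simp only [Int.coe_castAddHom] at hh
    refine ⟨h, fun v => Int.cast_injective (α := ℝ) ?_, fun e => ?_⟩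
    · push_cast
      simp only [hh, hf v]
    · simp [← hh]
  obtain ⟨e₀, he₀⟩ := not_forall.1 hint
  let F : Finset G.E := {e | f e ∉ S}
  obtain ⟨d, hd, hd0, hdF⟩ := exists_isCirculation_ne_zero (K := ℝ) F ⟨e₀, by simpa [F]⟩
    fun v e he hve => by
      obtain ⟨e', hve', hne, he'⟩ := hf.exists_inc_ne_notMem S hve (by simpa [F] using he)
      exact ⟨e', by simpa [F] using he', hne, hve'⟩
  obtain ⟨μ, hμ, e₁, hde₁, m, hm⟩ := exists_add_mul_mem_Icc_floor_ceil f d hd0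
  let f' := f + μ • d
  have hlt : #{e | f' e ∉ S} < n := by
    rw [← hn]
    refine card_lt_card ((ssubset_iff_of_subset fun e he => ?_).2 ⟨e₁, ?_, ?_⟩)
    · by_contra hfe
      have hde : d e = 0 := hdF e hfe
      simp_all [f']
    · by_contra he₁
      exact hde₁ (hdF e₁ he₁)
    · simp only [f', mem_filter, Pi.add_apply, Pi.smul_apply, smul_eq_mul, hm]
      exact fun h => h.2 ⟨m, rfl⟩
  obtain ⟨h, hh, hb⟩ := ih _ hlt (hf.add (hd.smul μ)) rfl
  refine ⟨h, hh, fun e => ⟨?_, ?_⟩⟩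
  · exact (Int.le_floor.2 (hμ e).1 : ⌊f e⌋ ≤ ⌊f' e⌋).trans (hb e).1
  · exact (hb e).2.trans (Int.ceil_le.2 (hμ e).2 : ⌈f' e⌉ ≤ ⌈f e⌉)

lemma card_filter_inc_sdiff {F N : Finset G.E} (hNF : N ⊆ F) (v : G.V) :
    #{e ∈ F \ N | G.Inc v e} = #{e ∈ F | G.Inc v e} - #{e ∈ N | G.Inc v e} := by
  rw [← card_sdiff_of_subset (filter_subset_filter _ hNF)]
  congr 1
  ext e
  simp only [mem_filter, mem_sdiff]
  tauto

lemma isPerfectMatching_coe_iff {N : Finset G.E} :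
    G.IsPerfectMatching ↑N ↔ ∀ v, #{e ∈ N | G.Inc v e} = 1 := by
  simp only [IsPerfectMatching, card_eq_one_iff_existsUnique, mem_filter, mem_coe]

lemma cut_compl (A : Set G.V) : G.cut Aᶜ = G.cut A := by
  ext e
  simp only [cut, Set.mem_ofPred_eq, Set.mem_compl_iff]
  tauto

def IsEdgeColoringOn (F : Finset G.E) (k : ℕ) (c : G.E → ℕ) : Prop :=
  (∀ e ∈ F, c e < k) ∧ ∀ e ∈ F, ∀ e' ∈ F, G.EAdj e e' → c e ≠ c e'

lemma IsEdgeColoringOn.union {F N : Finset G.E} {k : ℕ} {c : G.E → ℕ}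
    (hc : G.IsEdgeColoringOn F k c) (hN : G.IsPerfectMatching ↑N) :
    G.IsEdgeColoringOn (F ∪ N) (k + 1) fun e => if e ∈ N then k else c e := by
  have hF : ∀ e ∈ F ∪ N, e ∉ N → e ∈ F := fun e he h => (mem_union.1 he).resolve_right h
  refine ⟨fun e he => ?_, fun e he e' he' hadj => ?_⟩
  · dsimp only
    split_ifs with h
    · exact k.lt_succ_self
    · exact (hc.1 e (hF e he h)).trans k.lt_succ_self
  by_cases h : e ∈ N <;> by_cases h' : e' ∈ N <;> simp only [h, h', if_true, if_false]
  · obtain ⟨hne, v, hv, hv'⟩ := hadj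
    exact absurd ((hN v).unique ⟨h, hv⟩ ⟨h', hv'⟩) hne
  · exact (hc.1 e' (hF e' he' h')).ne'
  · exact (hc.1 e (hF e he h)).ne
  · exact hc.2 e (hF e he h) e' (hF e' he' h') hadj

section Bipartite

variable {F : Finset G.E} {A : Set G.V}

lemma eq_of_inc_of_inc (hA : ↑F ⊆ G.cut A) {e : G.E} (he : e ∈ F) {v w : G.V}
    (hv : G.Inc v e) (hw : G.Inc w e) (hvw : v ∈ A ↔ w ∈ A) : v = w := by
  have : ¬(G.tail e ∈ A ↔ G.head e ∈ A) := hA he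
  rcases hv with rfl | rfl <;> rcases hw with rfl | rfl <;> first | rfl | tauto

lemma inc_otherEnd (e : G.E) (v : G.V) : G.Inc (G.otherEnd e v) e := by
  unfold otherEnd
  split_ifs
  exacts [Or.inr rfl, Or.inl rfl]

lemma otherEnd_mem_iff (hA : ↑F ⊆ G.cut A) {e : G.E} (he : e ∈ F) {v : G.V}
    (hv : G.Inc v e) : G.otherEnd e v ∈ A ↔ v ∉ A := by
  have : ¬(G.tail e ∈ A ↔ G.head e ∈ A) := hA he
  unfold otherEnd
  split_ifs with h
  · subst h
    tauto
  · obtain rfl : G.head e = v := hv.resolve_left h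
    tauto

lemma exists_injective_of_subset_cut (hA : ↑F ⊆ G.cut A) {k : ℕ}
    (hreg : ∀ v, #{e ∈ F | G.Inc v e} = k + 1) :
    ∃ φ : A → ↥Aᶜ, Function.Injective φ ∧
      ∀ a : A, ∃ e ∈ F, G.Inc a e ∧ G.Inc (φ a) e := by
  let nbrs : A → Finset G.V := fun a => {e ∈ F | G.Inc a e}.image (G.otherEnd · a)
  have hall : ∀ s : Finset A, #s ≤ #(s.biUnion nbrs) := fun s => by
    have hdisj : (s : Set A).PairwiseDisjoint fun a => {e ∈ F | G.Inc a e} :=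
      fun a _ b _ hab => disjoint_filter.2 fun e he hae hbe =>
        hab (Subtype.ext (eq_of_inc_of_inc hA he hae hbe (by simp [a.2, b.2])))
    have hsub : s.biUnion (fun a => {e ∈ F | G.Inc a e}) ⊆
        (s.biUnion nbrs).biUnion fun b => {e ∈ F | G.Inc b e} := fun e he => by
      obtain ⟨a, ha, hae⟩ := mem_biUnion.1 he
      exact mem_biUnion.2 ⟨_, mem_biUnion.2 ⟨a, ha, mem_image_of_mem _ hae⟩,
        mem_filter.2 ⟨(mem_filter.1 hae).1, inc_otherEnd e a⟩⟩
    refine Nat.le_of_mul_le_mul_right ?_ k.succ_pos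
    calc #s * (k + 1) = #(s.biUnion fun a => {e ∈ F | G.Inc a e}) := by
          rw [card_biUnion hdisj, sum_const_nat fun (a : A) _ => hreg a]
      _ ≤ #((s.biUnion nbrs).biUnion fun b => {e ∈ F | G.Inc b e}) := card_le_card hsub
      _ ≤ ∑ b ∈ s.biUnion nbrs, #{e ∈ F | G.Inc b e} := card_biUnion_le
      _ = #(s.biUnion nbrs) * (k + 1) := sum_const_nat fun b _ => hreg b
  obtain ⟨φ, hφinj, hφ⟩ := (all_card_le_biUnion_card_iff_exists_injective nbrs).1 hall
  have hφ' : ∀ a : A, ∃ e ∈ F, G.Inc a e ∧ G.otherEnd e a = φ a := fun a => by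
    obtain ⟨e, he, hφe⟩ := mem_image.1 (hφ a)
    exact ⟨e, (mem_filter.1 he).1, (mem_filter.1 he).2, hφe⟩
  choose ε hεF hεa hεφ using hφ'
  refine ⟨fun a => ⟨φ a, ?_⟩, fun a b hab => hφinj (congrArg Subtype.val hab), fun a =>
    ⟨ε a, hεF a, hεa a, hεφ a ▸ inc_otherEnd _ _⟩⟩
  rw [← hεφ a]
  exact fun h => (otherEnd_mem_iff hA (hεF a) (hεa a)).1 h a.2

lemma exists_isPerfectMatching_of_subset_cut (hA : ↑F ⊆ G.cut A) {k : ℕ}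
    (hreg : ∀ v, #{e ∈ F | G.Inc v e} = k + 1) : ∃ N ⊆ F, G.IsPerfectMatching ↑N := by
  obtain ⟨φ, hφinj, hφ⟩ := exists_injective_of_subset_cut hA hreg
  obtain ⟨ψ, hψinj, -⟩ :=
    exists_injective_of_subset_cut (A := Aᶜ) (G.cut_compl A ▸ hA) hreg
  have hφsurj : Function.Surjective φ := (hφinj.bijective_of_nat_card_le <| by
    simpa only [compl_compl] using Nat.card_le_card_of_injective ψ hψinj).2
  choose ε hεF hεa hεφ using hφ
  refine ⟨univ.image ε, fun e he => ?_, fun v => ?_⟩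
  · obtain ⟨a, -, rfl⟩ := mem_image.1 he
    exact hεF a
  simp only [mem_coe, mem_image, mem_univ, true_and]
  by_cases hv : v ∈ A
  · refine ⟨ε ⟨v, hv⟩, ⟨⟨_, rfl⟩, hεa _⟩, ?_⟩
    rintro _ ⟨⟨a, rfl⟩, hve⟩
    obtain rfl : v = a := eq_of_inc_of_inc hA (hεF a) hve (hεa a) (by simp [hv, a.2])
    rfl
  · obtain ⟨a₀, ha₀⟩ := hφsurj ⟨v, hv⟩
    refine ⟨ε a₀, ⟨⟨a₀, rfl⟩, by simpa [ha₀] using hεφ a₀⟩, ?_⟩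
    rintro _ ⟨⟨a, rfl⟩, hve⟩
    have hva : v = φ a := eq_of_inc_of_inc hA (hεF a) hve (hεφ a) (by simp [hv, (φ a).2.out])
    rw [hφinj (ha₀.trans (Subtype.ext hva))]

theorem exists_isEdgeColoringOn_of_subset_cut (hA : ↑F ⊆ G.cut A) {k : ℕ}
    (hreg : ∀ v, #{e ∈ F | G.Inc v e} = k) : ∃ c, G.IsEdgeColoringOn F k c := by
  induction k generalizing F with
  | zero =>
    have hF : ∀ e, e ∉ F := fun e he =>
      (card_pos.2 ⟨e, mem_filter.2 ⟨he, Or.inl rfl⟩⟩).ne' (hreg (G.tail e))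
    exact ⟨fun _ => 0, fun e he => absurd he (hF e), fun e he => absurd he (hF e)⟩
  | succ k ih =>
    obtain ⟨N, hNF, hN⟩ := exists_isPerfectMatching_of_subset_cut hA hreg
    obtain ⟨c, hc⟩ := ih (F := F \ N) ((coe_subset.2 sdiff_subset).trans hA) fun v => by
      rw [card_filter_inc_sdiff hNF, hreg, isPerfectMatching_coe_iff.1 hN, Nat.add_sub_cancel]
    exact ⟨_, sdiff_union_of_subset hNF ▸ hc.union hN⟩

theorem exists_isProperEdgeColoring_of_subset_cut {k : ℕ} (hreg : G.IsRegular (k + 1))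
    {M : Finset G.E} (hM : G.IsPerfectMatching ↑M) (hA : ↑(univ \ M) ⊆ G.cut A) :
    ∃ c : G.E → Fin (k + 1), G.IsProperEdgeColoring c := by
  obtain ⟨c, hc⟩ := exists_isEdgeColoringOn_of_subset_cut hA (k := k) fun v => by
    rw [card_filter_inc_sdiff (subset_univ M), isPerfectMatching_coe_iff.1 hM, ← degree_eq_card,
      hreg v, Nat.add_sub_cancel]
  have hc' := hc.union hM
  rw [sdiff_union_of_subset (subset_univ M)] at hc'
  exact ⟨fun e => ⟨_, hc'.1 e (mem_univ e)⟩, fun e e' hee' heq =>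
    hc'.2 e (mem_univ e) e' (mem_univ e') hee' (congrArg Fin.val heq)⟩

end Bipartite

theorem IsCirculation.exists_isPerfectMatching_subset_cut {t : ℕ} (ht : 1 ≤ t)
    (hreg : G.IsRegular (2 * t + 1)) {h : G.E → ℤ} (hh : G.IsCirculation h)
    (hb : ∀ e, |h e| ∈ Set.Icc (2 * (t : ℤ) - 1) (2 * t + 1)) :
    ∃ M : Finset G.E, G.IsPerfectMatching ↑M ∧
      ∃ A : Set G.V, ↑(univ \ M) ⊆ G.cut A := by
  -- `x v e` is the flow along `e` out of `v`
  let x : G.V → G.E → ℤ := fun v e => if G.tail e = v then h e else -h e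
  have habs : ∀ v e, |x v e| = |h e| := fun v e => by
    simp only [x]
    split_ifs <;> simp
  have hloc := fun v => card_abs_eq_eq_one_and_forall_of_sum_eq_zero ht (S := {e | G.Inc v e})
    (x := x v) (by rw [← degree_eq_card, hreg v]) (hh.sum_inc_eq_zero v)
    (fun e _ => habs v e ▸ hb e)
  let M : Finset G.E := {e | |h e| = 2 * t}
  let A : Set G.V :=
    {v | ∀ e, G.Inc v e → x v e ≤ 2 * t ∧ (0 < x v e ∨ x v e ≤ -(2 * t))}
  have hside : ∀ v e, G.Inc v e →
      (v ∈ A → x v e ≤ 2 * t ∧ (0 < x v e ∨ x v e ≤ -(2 * t))) ∧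
      (v ∉ A → -(2 * t) ≤ x v e ∧ (x v e < 0 ∨ 2 * t ≤ x v e)) := fun v e hve =>
    ⟨fun hv => hv e hve, fun hv => ((hloc v).2.resolve_left fun hP =>
      hv fun e' he' => hP e' (by simpa using he')) e (by simpa using hve)⟩
  refine ⟨M, isPerfectMatching_coe_iff.2 fun v => ?_, A, fun e he => ?_⟩
  · rw [← (hloc v).1]
    congr 1
    ext e
    simp only [M, mem_filter, mem_univ, true_and, habs]
    tauto
  -- outside `M` the flow values are `±(2t ± 1)`, and `x` tells the two ends of such an edge apart
  have hne : |h e| ≠ 2 * t := by simpa [M] using he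
  rw [Ne, abs_eq (by positivity)] at hne
  have htail := hside _ e (Or.inl rfl)
  have hhead := hside _ e (Or.inr rfl)
  have hloop : G.tail e ≠ G.head e := G.no_loop e
  simp only [x, if_pos rfl, if_neg hloop] at htail hhead
  intro hiff
  by_cases h1 : G.tail e ∈ A
  · have := htail.1 h1
    have := hhead.1 (hiff.1 h1)
    omega
  · have := htail.2 h1
    have := hhead.2 (mt hiff.2 h1)
    omega

end Multigraph

theorem statement_2_general (t : ℕ) (ht : 1 ≤ t) (G : Multigraph)
    (hreg : G.IsRegular (2 * t + 1)) (hcl : G.IsClass2) :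
    ((2 + 2 / (2 * (t : ℝ) - 1) : ℝ) : EReal) < G.flowNumber := by
  by_contra! hle
  have hpos : (0 : ℝ) < 2 * t - 1 := by
    have : (1 : ℝ) ≤ t := by exact_mod_cast ht
    linarith
  obtain ⟨f, hf⟩ := G.hasNZFlow_of_flowNumber_le hle
  obtain ⟨hfb, hfc⟩ := Multigraph.isNZFlow_iff.1 hf
  -- rescaling by `2t - 1` turns the range `[1, 1 + 2/(2t-1)]` into `[2t-1, 2t+1]`
  have hscaled (e : G.E) :
      |(2 * (t : ℝ) - 1) * f e| ∈ Set.Icc ((2 * t - 1 : ℤ) : ℝ) (2 * t + 1 : ℤ) := by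
    obtain ⟨h1, h2⟩ := hfb e
    rw [abs_mul, abs_of_pos hpos]
    push_cast
    constructor
    · nlinarith
    · calc (2 * (t : ℝ) - 1) * |f e| ≤ (2 * t - 1) * (2 + 2 / (2 * t - 1) - 1) :=
          mul_le_mul_of_nonneg_left h2 hpos.le
        _ = 2 * t + 1 := by field_simp; ring
  obtain ⟨h, hh, hhf⟩ := (hfc.smul (2 * (t : ℝ) - 1)).exists_int_mem_Icc_floor_ceil
  obtain ⟨M, hM, A, hA⟩ := hh.exists_isPerfectMatching_subset_cut ht hreg
    fun e => abs_mem_Icc_of_mem_Icc_floor_ceil (hscaled e) (hhf e)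
  obtain ⟨c, hc⟩ := Multigraph.exists_isProperEdgeColoring_of_subset_cut hreg hM hA
  exact hcl (Multigraph.isClass1_of_isProperEdgeColoring hreg hc)

/-- For every integer `t ≥ 1`, every bridgeless `(2t+1)`-regular
class 2 multigraph `G` satisfies `φ_c(G) > 2 + 2/(2t-1)`. -/
theorem statement_2 (t : ℕ) (ht : 1 ≤ t) (G : Multigraph)
    (hbl : G.Bridgeless) (hreg : G.IsRegular (2 * t + 1)) (hcl : G.IsClass2) :
    ((2 + 2 / (2 * (t : ℝ) - 1) : ℝ) : EReal) < G.flowNumber :=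
  statement_2_general t ht G hreg hcl
end

section
/- Let P be the Petersen graph, let k ≥ 0 be an integer, and let M_1, …, M_k be perfect matchings of P (not necessarily distinct). Then the multigraph P + Σ_{i=1}^{k} M_i is a (k+3)-regular class 2 graph, i.e., it admits no proper (k+3)-edge-coloring. -/
/-- The Petersen graph: the Kneser graph on the 2-element subsets of a
5-element set, two subsets adjacent iff disjoint.  Each (unordered) edge is
recorded once, ordered by a binary encoding of the subsets. -/
noncomputable def petersen : Multigraph where
  V := {s : Finset (Fin 5) // s.card = 2}
  E := {p : {s : Finset (Fin 5) // s.card = 2} × {s : Finset (Fin 5) // s.card = 2} //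
        Disjoint p.1.1 p.2.1 ∧ (p.1.1.sum fun i => 2 ^ (i : ℕ)) < p.2.1.sum fun i => 2 ^ (i : ℕ)}
  vFinite := by infer_instance
  eFinite := by infer_instance
  ends := fun e => (e.1.1, e.1.2)
  no_loop := fun e h =>
    ne_of_lt e.2.2
      (congrArg (fun s : {s : Finset (Fin 5) // s.card = 2} => s.1.sum fun i => 2 ^ (i : ℕ)) h)

/-!
A proper `(k + 3)`-edge-coloring of the `(k + 3)`-regular multigraph `P + Σ Mᵢ` has perfect
matchings as color classes; projected to `P` they give `k + 3` perfect matchings `N_j` of `P`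
covering each edge `e` exactly `1 + #{i | e ∈ M_i}` times. Summing over a set `T` of edges,
`Σ_j |N_j ∩ T| = |T| + Σ_i |M_i ∩ T|`. The Petersen graph has a set `T` of three edges that
every perfect matching meets in an even number of edges, so the left side is even and the
right side is odd.
-/

open Finset

def exactlyOne (x y z : Bool) : Bool := (x && !y && !z) || (!x && y && !z) || (!x && !y && z)

lemma Finset.card_filter_triple {α : Type*} [DecidableEq α] {a b c : α} (hab : a ≠ b)
    (hac : a ≠ c) (hbc : b ≠ c) (p : α → Prop) [DecidablePred p] :
    #{x ∈ ({a, b, c} : Finset α) | p x} =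
      (decide (p a)).toNat + (decide (p b)).toNat + (decide (p c)).toNat := by
  rw [card_filter, sum_insert (by simp [hab, hac]), sum_insert (by simp [hbc]), sum_singleton]
  simp only [Bool.toNat, Bool.cond_decide, add_assoc]

namespace Multigraph

variable {G : Multigraph}

section Coloring

lemma exists_isProperEdgeColoring (G : Multigraph) :
    ∃ n, ∃ c : G.E → Fin n, G.IsProperEdgeColoring c := by
  obtain ⟨n, ⟨f⟩⟩ := Finite.exists_equiv_fin G.E
  exact ⟨n, f, fun e e' h => f.injective.ne h.1⟩

lemma exists_isProperEdgeColoring_chromaticIndex (G : Multigraph) :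
    ∃ c : G.E → Fin G.chromaticIndex, G.IsProperEdgeColoring c :=
  Nat.sInf_mem G.exists_isProperEdgeColoring

lemma maxDegree_eq_of_isRegular [Nonempty G.V] {r : ℕ} (h : G.IsRegular r) :
    G.maxDegree = r := by
  rw [maxDegree, show G.degree = fun _ => r from funext h, Set.range_const, csSup_singleton]

lemma isClass2_of_isRegular [Nonempty G.V] {r : ℕ} (h : G.IsRegular r)
    (hc : ¬ ∃ c : G.E → Fin r, G.IsProperEdgeColoring c) : G.IsClass2 := fun h1 => by
  have := G.exists_isProperEdgeColoring_chromaticIndex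
  rw [show G.chromaticIndex = r from h1.trans (maxDegree_eq_of_isRegular h)] at this
  exact hc this

lemma IsPerfectMatching.card_incident {N : Set G.E} (hN : G.IsPerfectMatching N) (v : G.V) :
    Nat.card {e : N // G.Inc v e} = 1 := by
  obtain ⟨e, ⟨heN, hev⟩, hu⟩ := hN v
  exact Nat.card_eq_one_iff_exists.2
    ⟨⟨⟨e, heN⟩, hev⟩, fun ⟨⟨x, hxN⟩, hxv⟩ => by simp only [hu x ⟨hxN, hxv⟩]⟩

lemma IsProperEdgeColoring.isPerfectMatching_preimage {r : ℕ} (hG : G.IsRegular r)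
    {c : G.E → Fin r} (hc : G.IsProperEdgeColoring c) (j : Fin r) :
    G.IsPerfectMatching (c ⁻¹' {j}) := by
  intro v
  have hinj : Function.Injective fun e : {e // G.Inc v e} => c e := fun e e' hee' => by
    by_contra hne
    exact hc e e' ⟨fun h => hne (Subtype.ext h), v, e.2, e'.2⟩ hee'
  have hcard : Nat.card (Fin r) ≤ Nat.card {e // G.Inc v e} := by
    rw [Nat.card_eq_fintype_card, Fintype.card_fin]
    exact (hG v).ge
  obtain ⟨⟨e, hev⟩, hej⟩ := (hinj.bijective_of_nat_card_le hcard).2 j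
  refine ⟨e, ⟨hej, hev⟩, fun e' ⟨he'j, he'v⟩ => ?_⟩
  exact congrArg Subtype.val (@hinj ⟨e', he'v⟩ ⟨e, hev⟩ (he'j.trans hej.symm))

end Coloring

section AddEdgeFamily

variable {k : ℕ} {M : Fin k → Set G.E}

def baseEdge (G : Multigraph) (M : Fin k → Set G.E) : (G.addEdgeFamily M).E → G.E :=
  Sum.elim id fun p => p.2.1

lemma inc_addEdgeFamily_iff {v : G.V} (a : (G.addEdgeFamily M).E) :
    (G.addEdgeFamily M).Inc v a ↔ G.Inc v (G.baseEdge M a) := by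
  cases a <;> exact Iff.rfl

lemma eAdj_addEdgeFamily_of_baseEdge_eq {a a' : (G.addEdgeFamily M).E} (hne : a ≠ a')
    (h : G.baseEdge M a = G.baseEdge M a') : (G.addEdgeFamily M).EAdj a a' :=
  ⟨hne, G.tail (G.baseEdge M a), (inc_addEdgeFamily_iff a).2 (Or.inl rfl),
    (inc_addEdgeFamily_iff a').2 (h ▸ Or.inl rfl)⟩

lemma card_baseEdge_preimage (p : G.E → Prop) :
    Nat.card {a : (G.addEdgeFamily M).E // p (G.baseEdge M a)} =
      Nat.card {e // p e} + ∑ i, Nat.card {x : M i // p x} := by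
  let sigmaSubtype : {y : Σ i, M i // p y.2} ≃ Σ i, {x : M i // p x} :=
    { toFun := fun y => ⟨y.1.1, y.1.2, y.2⟩
      invFun := fun x => ⟨⟨x.1, x.2.1⟩, x.2.2⟩
      left_inv := fun _ => rfl
      right_inv := fun _ => rfl }
  rw [← Nat.card_sigma, ← Nat.card_sum]
  exact Nat.card_congr (Equiv.subtypeSum.trans (Equiv.sumCongr (Equiv.refl _) sigmaSubtype))

lemma isRegular_addEdgeFamily {r : ℕ} (hG : G.IsRegular r)
    (hM : ∀ i, G.IsPerfectMatching (M i)) : (G.addEdgeFamily M).IsRegular (r + k) := by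
  intro v
  refine (Nat.card_congr
    (Equiv.subtypeEquivRight fun a => inc_addEdgeFamily_iff (M := M) a)).trans ?_
  rw [card_baseEdge_preimage, show Nat.card {e // G.Inc v e} = r from hG v]
  simp [fun i => (hM i).card_incident v]

open Classical in
lemma card_baseEdge_fiber (e : G.E) :
    Nat.card {a : (G.addEdgeFamily M).E // G.baseEdge M a = e} = 1 + #{i | e ∈ M i} := by
  have hfiber (i : Fin k) : Nat.card {x : M i // (x : G.E) = e} = if e ∈ M i then 1 else 0 := by
    split_ifs with he
    · exact Nat.card_eq_one_iff_exists.2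
        ⟨⟨⟨e, he⟩, rfl⟩, fun ⟨⟨x, hx⟩, hxe⟩ => by subst hxe; rfl⟩
    · exact Nat.card_eq_zero.2 (Or.inl ⟨fun x => he (x.2 ▸ x.1.2)⟩)
  rw [card_baseEdge_preimage (· = e), Nat.card_unique, card_filter]
  simp only [hfiber]

lemma IsPerfectMatching.image_baseEdge {N : Set (G.addEdgeFamily M).E}
    (hN : (G.addEdgeFamily M).IsPerfectMatching N) : G.IsPerfectMatching (G.baseEdge M '' N) := by
  intro v
  obtain ⟨a, ⟨haN, hav⟩, hu⟩ := hN v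
  refine ⟨G.baseEdge M a, ⟨⟨a, haN, rfl⟩, (inc_addEdgeFamily_iff a).1 hav⟩, ?_⟩
  rintro _ ⟨⟨a', ha'N, rfl⟩, ha'v⟩
  rw [hu a' ⟨ha'N, (inc_addEdgeFamily_iff a').2 ha'v⟩]

open Classical in
lemma card_colors_mem_image_baseEdge {n : ℕ} {c : (G.addEdgeFamily M).E → Fin n}
    (hc : (G.addEdgeFamily M).IsProperEdgeColoring c) (e : G.E) :
    #{j | e ∈ G.baseEdge M '' (c ⁻¹' {j})} =
      Nat.card {a : (G.addEdgeFamily M).E // G.baseEdge M a = e} := by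
  rw [← Fintype.card_subtype, ← Nat.card_eq_fintype_card]
  refine (Nat.card_congr (Equiv.ofBijective (fun a => ⟨c a.1, a.1, rfl, a.2⟩)
    ⟨fun a a' h => ?_, fun ⟨j, a, haj, hae⟩ => ⟨⟨a, hae⟩, Subtype.ext haj⟩⟩)).symm
  by_contra hne
  exact hc a a' (eAdj_addEdgeFamily_of_baseEdge_eq (fun h' => hne (Subtype.ext h'))
    (a.2.trans a'.2.symm)) (congrArg Subtype.val h)

open Classical in
theorem not_exists_isProperEdgeColoring_addEdgeFamily {n : ℕ}
    (hreg : (G.addEdgeFamily M).IsRegular n) (hM : ∀ i, G.IsPerfectMatching (M i))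
    (T : Finset G.E) (hT : Odd #T)
    (hTN : ∀ N, G.IsPerfectMatching N → Even #{e ∈ T | e ∈ N}) :
    ¬ ∃ c : (G.addEdgeFamily M).E → Fin n, (G.addEdgeFamily M).IsProperEdgeColoring c := by
  rintro ⟨c, hc⟩
  set N : Fin n → Set G.E := fun j => G.baseEdge M '' (c ⁻¹' {j})
  have hN (j : Fin n) : G.IsPerfectMatching (N j) :=
    (hc.isPerfectMatching_preimage hreg j).image_baseEdge
  have hmult (e : G.E) : #{j | e ∈ N j} = 1 + #{i | e ∈ M i} :=
    (card_colors_mem_image_baseEdge hc e).trans (card_baseEdge_fiber e)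
  have hcount : ∑ j, #{e ∈ T | e ∈ N j} = #T + ∑ i, #{e ∈ T | e ∈ M i} :=
    calc ∑ j, #{e ∈ T | e ∈ N j}
        = ∑ e ∈ T, #{j | e ∈ N j} :=
          (sum_card_bipartiteAbove_eq_sum_card_bipartiteBelow _).symm
      _ = ∑ e ∈ T, (1 + #{i | e ∈ M i}) := sum_congr rfl fun e _ => hmult e
      _ = #T + ∑ i, #{e ∈ T | e ∈ M i} := by
        rw [sum_add_distrib, card_eq_sum_ones]
        exact congrArg _ (sum_card_bipartiteAbove_eq_sum_card_bipartiteBelow _)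
  have hleft : Even (∑ j, #{e ∈ T | e ∈ N j}) := even_sum _ fun j _ => hTN _ (hN j)
  have hright : Even (∑ i, #{e ∈ T | e ∈ M i}) := even_sum _ fun i _ => hTN _ (hM i)
  rw [hcount, Nat.even_add] at hleft
  exact Nat.not_even_iff_odd.2 hT (hleft.2 hright)

end AddEdgeFamily

open Classical in
lemma IsPerfectMatching.exactlyOne_mem {N : Set G.E} (hN : G.IsPerfectMatching N) (v : G.V)
    (a b c : G.E) (hstar : ∀ e, G.Inc v e ↔ e = a ∨ e = b ∨ e = c)
    (hne : a ≠ b ∧ a ≠ c ∧ b ≠ c) :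
    exactlyOne (decide (a ∈ N)) (decide (b ∈ N)) (decide (c ∈ N)) = true := by
  obtain ⟨e, ⟨heN, hev⟩, hu⟩ := hN v
  have hmem : ∀ x, G.Inc v x → (x ∈ N ↔ x = e) := fun x hx =>
    ⟨fun hxN => hu x ⟨hxN, hx⟩, (· ▸ heN)⟩
  rw [hmem a ((hstar a).2 (Or.inl rfl)), hmem b ((hstar b).2 (Or.inr (Or.inl rfl))),
    hmem c ((hstar c).2 (Or.inr (Or.inr rfl)))]
  obtain ⟨hab, hac, hbc⟩ := hne
  rcases (hstar e).1 hev with rfl | rfl | rfl <;>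
    simp [exactlyOne, hab, hac, hbc, hab.symm, hac.symm, hbc.symm]

end Multigraph

namespace Petersen

open Multigraph

instance : Fintype petersen.V := inferInstanceAs (Fintype (Subtype _))
instance : DecidableEq petersen.V := inferInstanceAs (DecidableEq (Subtype _))
instance : Fintype petersen.E := inferInstanceAs (Fintype (Subtype _))
instance : DecidableEq petersen.E := inferInstanceAs (DecidableEq (Subtype _))
noncomputable instance (v : petersen.V) : DecidablePred (petersen.Inc v) :=
  fun _ => inferInstanceAs (Decidable (_ ∨ _))

def v01 : petersen.V := ⟨{0, 1}, rfl⟩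
def v02 : petersen.V := ⟨{0, 2}, rfl⟩
def v03 : petersen.V := ⟨{0, 3}, rfl⟩
def v04 : petersen.V := ⟨{0, 4}, rfl⟩
def v12 : petersen.V := ⟨{1, 2}, rfl⟩
def v13 : petersen.V := ⟨{1, 3}, rfl⟩
def v14 : petersen.V := ⟨{1, 4}, rfl⟩
def v23 : petersen.V := ⟨{2, 3}, rfl⟩
def v24 : petersen.V := ⟨{2, 4}, rfl⟩
def v34 : petersen.V := ⟨{3, 4}, rfl⟩

-- `eab_cd` joins `{a, b}` and `{c, d}`, oriented as in `petersen`.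
def e01_23 : petersen.E := ⟨(v01, v23), by decide⟩
def e01_24 : petersen.E := ⟨(v01, v24), by decide⟩
def e01_34 : petersen.E := ⟨(v01, v34), by decide⟩
def e02_13 : petersen.E := ⟨(v02, v13), by decide⟩
def e02_14 : petersen.E := ⟨(v02, v14), by decide⟩
def e02_34 : petersen.E := ⟨(v02, v34), by decide⟩
def e03_12 : petersen.E := ⟨(v12, v03), by decide⟩
def e03_14 : petersen.E := ⟨(v03, v14), by decide⟩
def e03_24 : petersen.E := ⟨(v03, v24), by decide⟩
def e04_12 : petersen.E := ⟨(v12, v04), by decide⟩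
def e04_13 : petersen.E := ⟨(v13, v04), by decide⟩
def e04_23 : petersen.E := ⟨(v23, v04), by decide⟩
def e12_34 : petersen.E := ⟨(v12, v34), by decide⟩
def e13_24 : petersen.E := ⟨(v13, v24), by decide⟩
def e14_23 : petersen.E := ⟨(v23, v14), by decide⟩

lemma isRegular : petersen.IsRegular 3 := by
  intro v
  rw [degree, Nat.card_eq_fintype_card]
  revert v
  decide

-- The hypotheses say that exactly one of the three edges at each vertex is chosen;
-- `decide` runs through all `2 ^ 15` choices.
lemma even_of_exactlyOne_at_vertices : ∀ x01_23 x01_24 x01_34 x02_13 x02_14 x02_34 x03_12 x03_14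
    x03_24 x04_12 x04_13 x04_23 x12_34 x13_24 x14_23 : Bool,
    exactlyOne x01_23 x01_24 x01_34 → exactlyOne x02_13 x02_14 x02_34 →
    exactlyOne x03_12 x03_14 x03_24 → exactlyOne x04_12 x04_13 x04_23 →
    exactlyOne x03_12 x04_12 x12_34 → exactlyOne x02_13 x04_13 x13_24 →
    exactlyOne x02_14 x03_14 x14_23 → exactlyOne x01_23 x04_23 x14_23 →
    exactlyOne x01_24 x03_24 x13_24 → exactlyOne x01_34 x02_34 x12_34 →
    Even (x01_23.toNat + x03_14.toNat + x12_34.toNat) := by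
  decide

def parityEdges : Finset petersen.E := {e01_23, e03_14, e12_34}

lemma odd_card_parityEdges : Odd #parityEdges := by decide

open Classical in
lemma even_card_filter_parityEdges {N : Set petersen.E} (hN : petersen.IsPerfectMatching N) :
    Even #{e ∈ parityEdges | e ∈ N} := by
  rw [parityEdges, card_filter_triple (by decide) (by decide) (by decide)]
  exact even_of_exactlyOne_at_vertices _ _ _ _ _ _ _ _ _ _ _ _ _ _ _
    (hN.exactlyOne_mem v01 e01_23 e01_24 e01_34 (by decide) (by decide))
    (hN.exactlyOne_mem v02 e02_13 e02_14 e02_34 (by decide) (by decide))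
    (hN.exactlyOne_mem v03 e03_12 e03_14 e03_24 (by decide) (by decide))
    (hN.exactlyOne_mem v04 e04_12 e04_13 e04_23 (by decide) (by decide))
    (hN.exactlyOne_mem v12 e03_12 e04_12 e12_34 (by decide) (by decide))
    (hN.exactlyOne_mem v13 e02_13 e04_13 e13_24 (by decide) (by decide))
    (hN.exactlyOne_mem v14 e02_14 e03_14 e14_23 (by decide) (by decide))
    (hN.exactlyOne_mem v23 e01_23 e04_23 e14_23 (by decide) (by decide))
    (hN.exactlyOne_mem v24 e01_24 e03_24 e13_24 (by decide) (by decide))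
    (hN.exactlyOne_mem v34 e01_34 e02_34 e12_34 (by decide) (by decide))

end Petersen

/-- for every `k ≥ 0` and all perfect matchings `M_1, …, M_k` of
the Petersen graph `P` (not necessarily distinct), the multigraph
`P + Σ_{i=1}^k M_i` is a `(k+3)`-regular class 2 graph, i.e. it admits no
proper `(k+3)`-edge-coloring. -/
theorem statement_15 (k : ℕ) (M : Fin k → Set petersen.E)
    (hM : ∀ i, petersen.IsPerfectMatching (M i)) :
    (petersen.addEdgeFamily M).IsRegular (k + 3) ∧
      (petersen.addEdgeFamily M).IsClass2 ∧
      ¬ ∃ c : (petersen.addEdgeFamily M).E → Fin (k + 3),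
          (petersen.addEdgeFamily M).IsProperEdgeColoring c := by
  have hreg : (petersen.addEdgeFamily M).IsRegular (k + 3) :=
    add_comm 3 k ▸ Multigraph.isRegular_addEdgeFamily Petersen.isRegular hM
  have hcol := Multigraph.not_exists_isProperEdgeColoring_addEdgeFamily hreg hM _
    Petersen.odd_card_parityEdges fun _ => Petersen.even_card_filter_parityEdges
  have : Nonempty (petersen.addEdgeFamily M).V := ⟨Petersen.v01⟩
  exact ⟨hreg, Multigraph.isClass2_of_isRegular hreg hcol, hcol⟩
end

section
/- Let n ≥ 1 and let e_1, e_2, …, e_{2n+1} be the edges of the cycle C_{2n+1} listed in cyclic order (so e_i and e_{i+1} are adjacent, indices modulo 2n+1). Let c : {e_1, …, e_{2n+1}} → {1, 2, 3} be a coloring such that there are no cyclically consecutive edges e_i, e_{i+1} with c(e_i) = c(e_{i+1}) = 3 and no cyclically consecutive edges e_i, e_{i+1} with {c(e_i), c(e_{i+1})} = {1, 2}. Then there exists an index j such that c(e_j) = c(e_{j+2}) (indices modulo 2n+1). -/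
/-!
Suppose no `j` has `c j = c (j + 2)`. If every two consecutive edges include a `3`, the colors
alternate `3, x, 3, x, …` and `c j = c (j + 2)` wherever `c j = 3`. Otherwise two consecutive edges
get the same color `a ≠ 3`, and the coloring is forced to continue as `a a 3 b b 3 a a 3 …` with
`{a, b} = {1, 2}`: it has period `6` and shifting by `3` swaps `a` and `b`. Since `6n + 3 ≡ 0`
modulo `2n + 1`, shifting by `3` undoes shifting by `6n`, which preserves the colors: a contradiction.
-/

section OddCycleColoring

variable {m : ℕ} {c : ZMod m → ℕ}

lemma eq_of_ne_three_of_ne_three (hrange : ∀ i, c i ∈ ({1, 2, 3} : Set ℕ))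
    (h12 : ∀ i, ¬ ((c i = 1 ∧ c (i + 1) = 2) ∨ (c i = 2 ∧ c (i + 1) = 1)))
    {j : ZMod m} (hj : c j ≠ 3) (hj1 : c (j + 1) ≠ 3) : c (j + 1) = c j := by
  have r0 := hrange j
  have r1 := hrange (j + 1)
  have h := h12 j
  simp only [Set.mem_insert_iff, Set.mem_singleton_iff] at r0 r1
  omega

lemma exists_eq_add_two_of_forall_eq_three (h3 : ∀ i, ¬ (c i = 3 ∧ c (i + 1) = 3))
    (hB : ∀ i, c i = 3 ∨ c (i + 1) = 3) : ∃ j, c j = c (j + 2) := by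
  obtain ⟨j, hj⟩ : ∃ j, c j = 3 := (hB 0).elim (⟨0, ·⟩) (⟨0 + 1, ·⟩)
  have hj2 : c (j + 1 + 1) = 3 := (hB (j + 1)).resolve_left fun h ↦ h3 j ⟨hj, h⟩
  exact ⟨j, by rw [hj, ← hj2, add_assoc, one_add_one_eq_two]⟩

def IsMonoPair (c : ZMod m → ℕ) (j : ZMod m) : Prop := c j ≠ 3 ∧ c (j + 1) = c j

lemma IsMonoPair.add_three (hrange : ∀ i, c i ∈ ({1, 2, 3} : Set ℕ))
    (h3 : ∀ i, ¬ (c i = 3 ∧ c (i + 1) = 3))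
    (h12 : ∀ i, ¬ ((c i = 1 ∧ c (i + 1) = 2) ∨ (c i = 2 ∧ c (i + 1) = 1)))
    (hc : ∀ j, c j ≠ c (j + 2)) {j : ZMod m} (hj : IsMonoPair c j) :
    IsMonoPair c (j + 3) ∧ c (j + 3) ≠ c j := by
  obtain ⟨hj3, hj1⟩ := hj
  have h2 : c (j + 2) = 3 := by
    by_contra h2
    have h := eq_of_ne_three_of_ne_three hrange h12 (j := j + 1) (hj1 ▸ hj3)
      (by rwa [add_assoc, one_add_one_eq_two])
    rw [add_assoc, one_add_one_eq_two, hj1] at h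
    exact hc j h.symm
  have h33 : c (j + 3) ≠ 3 := fun h ↦ h3 (j + 2) ⟨h2, by rwa [add_assoc, two_add_one_eq_three]⟩
  have h4 : c (j + 3 + 1) ≠ 3 := by
    rw [← h2, show j + 3 + 1 = j + 2 + 2 by ring]
    exact (hc (j + 2)).symm
  refine ⟨⟨h33, eq_of_ne_three_of_ne_three hrange h12 h33 h4⟩, fun h ↦ hc (j + 1) ?_⟩
  rw [hj1, add_assoc, show (1 + 2 : ZMod m) = 3 by norm_num, h]

lemma IsMonoPair.add_six (hrange : ∀ i, c i ∈ ({1, 2, 3} : Set ℕ))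
    (h3 : ∀ i, ¬ (c i = 3 ∧ c (i + 1) = 3))
    (h12 : ∀ i, ¬ ((c i = 1 ∧ c (i + 1) = 2) ∨ (c i = 2 ∧ c (i + 1) = 1)))
    (hc : ∀ j, c j ≠ c (j + 2)) {j : ZMod m} (hj : IsMonoPair c j) :
    IsMonoPair c (j + 6) ∧ c (j + 6) = c j := by
  obtain ⟨hj₃, hne₃⟩ := hj.add_three hrange h3 h12 hc
  obtain ⟨hj₆, hne₆⟩ := hj₃.add_three hrange h3 h12 hc
  rw [add_assoc, show (3 + 3 : ZMod m) = 6 by norm_num] at hj₆ hne₆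
  refine ⟨hj₆, ?_⟩
  have r₀ := hrange j
  have r₃ := hrange (j + 3)
  have r₆ := hrange (j + 6)
  simp only [Set.mem_insert_iff, Set.mem_singleton_iff] at r₀ r₃ r₆
  have := hj.1
  have := hj₃.1
  have := hj₆.1
  omega

lemma IsMonoPair.add_six_mul (hrange : ∀ i, c i ∈ ({1, 2, 3} : Set ℕ))
    (h3 : ∀ i, ¬ (c i = 3 ∧ c (i + 1) = 3))
    (h12 : ∀ i, ¬ ((c i = 1 ∧ c (i + 1) = 2) ∨ (c i = 2 ∧ c (i + 1) = 1)))
    (hc : ∀ j, c j ≠ c (j + 2)) {j : ZMod m} (hj : IsMonoPair c j) (k : ℕ) :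
    IsMonoPair c (j + 6 * k) ∧ c (j + 6 * k) = c j := by
  induction k with
  | zero => simpa using hj
  | succ k ih =>
    obtain ⟨hk, hkj⟩ := ih.1.add_six hrange h3 h12 hc
    rw [Nat.cast_succ, mul_add_one, ← add_assoc]
    exact ⟨hk, hkj.trans ih.2⟩

end OddCycleColoring

lemma not_isMonoPair_of_odd {n : ℕ} {c : ZMod (2 * n + 1) → ℕ}
    (hrange : ∀ i, c i ∈ ({1, 2, 3} : Set ℕ))
    (h3 : ∀ i, ¬ (c i = 3 ∧ c (i + 1) = 3))
    (h12 : ∀ i, ¬ ((c i = 1 ∧ c (i + 1) = 2) ∨ (c i = 2 ∧ c (i + 1) = 1)))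
    (hc : ∀ j, c j ≠ c (j + 2)) (j : ZMod (2 * n + 1)) : ¬ IsMonoPair c j := by
  intro hj
  obtain ⟨hn, hnj⟩ := hj.add_six_mul hrange h3 h12 hc n
  have hcycle : j + 6 * n + 3 = j := by
    have h := ZMod.natCast_self (2 * n + 1)
    push_cast at h
    linear_combination 3 * h
  have hne := (hn.add_three hrange h3 h12 hc).2
  rw [hcycle, hnj] at hne
  exact hne rfl

theorem statement_17_general (n : ℕ) (c : ZMod (2 * n + 1) → ℕ)
    (hrange : ∀ i, c i ∈ ({1, 2, 3} : Set ℕ))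
    (h3 : ∀ i, ¬ (c i = 3 ∧ c (i + 1) = 3))
    (h12 : ∀ i, ¬ ((c i = 1 ∧ c (i + 1) = 2) ∨ (c i = 2 ∧ c (i + 1) = 1))) :
    ∃ j : ZMod (2 * n + 1), c j = c (j + 2) := by
  by_contra! hc
  by_cases hB : ∀ i, c i = 3 ∨ c (i + 1) = 3
  · obtain ⟨j, hj⟩ := exists_eq_add_two_of_forall_eq_three h3 hB
    exact hc j hj
  · push Not at hB
    obtain ⟨i, hi, hi1⟩ := hB
    exact not_isMonoPair_of_odd hrange h3 h12 hc i
      ⟨hi, eq_of_ne_three_of_ne_three hrange h12 hi hi1⟩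

/-- if the edges `e_1, …, e_{2n+1}` of an odd cycle (indexed
cyclically by `ZMod (2n+1)`) are colored with colors `1, 2, 3` so that no two
cyclically consecutive edges both get color `3`, and no two cyclically
consecutive edges get the two colors `1` and `2`, then some two edges at
cyclic distance two get the same color. -/
theorem statement_17 (n : ℕ) (hn : 1 ≤ n) (c : ZMod (2 * n + 1) → ℕ)
    (hrange : ∀ i, c i ∈ ({1, 2, 3} : Set ℕ))
    (h3 : ∀ i, ¬ (c i = 3 ∧ c (i + 1) = 3))
    (h12 : ∀ i, ¬ ((c i = 1 ∧ c (i + 1) = 2) ∨ (c i = 2 ∧ c (i + 1) = 1))) :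
    ∃ j : ZMod (2 * n + 1), c j = c (j + 2) :=
  statement_17_general n c hrange h3 h12
end
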